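/- Let p be a pixel of a grid graph and C a cycle cover. If some walk of C makes a turn at p, then the union of the horizontal and the vertical full strips through p contains at least three turns (counting multiplicity, with U-turns counting twice). -/

import Mathlib

/-- A pixel is a point of the integer lattice. -/
abbrev Pixel : Type := ℤ × ℤ

/-- A unit step in one of the four axis directions. -/
def IsUnitStep (d : Pixel) : Prop := d = (1, 0) ∨ d = (-1, 0) ∨ d = (0, 1) ∨ d = (0, -1)

/-- A closed walk with `n+1` edge traversals in the integer grid: a cyclic sequence of
vertices, consecutive ones at distance 1. -/
structure GridWalk (n : ℕ) where
  v : ZMod (n + 1) → Pixel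
  step : ∀ i, IsUnitStep (v (i + 1) - v i)

namespace GridWalk

variable {n : ℕ}

/-- Direction of the `i`-th step. -/
def dir (w : GridWalk n) (i : ZMod (n + 1)) : Pixel := w.v (i + 1) - w.v i

/-- Turn cost at a vertex visit with incoming direction `din` and outgoing direction `dout`:
going straight costs 0, a 90° turn costs 1, a U-turn costs 2. -/
def turnCost (din dout : Pixel) : ℕ :=
  if dout = din then 0 else if dout = -din then 2 else 1

/-- Turn cost at the `i`-th vertex visit. -/
def turnAt (w : GridWalk n) (i : ZMod (n + 1)) : ℕ := turnCost (w.dir (i - 1)) (w.dir i)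

/-- Total number of turns of the walk (U-turns counting twice). -/
def turns (w : GridWalk n) : ℕ := ∑ i, w.turnAt i

/-- Number of turns the walk makes at pixels of the set `S` (U-turns counting twice). -/
noncomputable def turnsIn (w : GridWalk n) (S : Set Pixel) : ℕ :=
  ∑ i, S.indicator (fun _ => w.turnAt i) (w.v i)

end GridWalk

/-- A cycle cover of the grid graph with pixel set `P`: a finite collection of closed walks
inside `P` that together visit every pixel of `P`. -/
structure CycleCover (P : Set Pixel) where
  k : ℕ
  len : Fin k → ℕ
  walk : (j : Fin k) → GridWalk (len j)
  mem : ∀ j i, (walk j).v i ∈ P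
  covers : ∀ p ∈ P, ∃ j i, (walk j).v i = p

namespace CycleCover

variable {P : Set Pixel}

/-- Number of turns the cycle cover makes at pixels of the set `S`. -/
noncomputable def turnsIn (C : CycleCover P) (S : Set Pixel) : ℕ :=
  ∑ j, (C.walk j).turnsIn S

/-- Total number of turns of the cycle cover. -/
def totalTurns (C : CycleCover P) : ℕ := ∑ j, (C.walk j).turns

end CycleCover

/-- The horizontal full strip of the grid graph `P` through the pixel `p`: all pixels in the
same row as `p` that are connected to `p` within `P` along that row. -/
def hStrip (P : Set Pixel) (p : Pixel) : Set Pixel :=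
  {q | q.2 = p.2 ∧ ∀ x : ℤ, min p.1 q.1 ≤ x → x ≤ max p.1 q.1 → ((x, p.2) : Pixel) ∈ P}

/-- The vertical full strip of the grid graph `P` through the pixel `p`. -/
def vStrip (P : Set Pixel) (p : Pixel) : Set Pixel :=
  {q | q.1 = p.1 ∧ ∀ y : ℤ, min p.2 q.2 ≤ y → y ≤ max p.2 q.2 → ((p.1, y) : Pixel) ∈ P}

/-- A full strip of the grid graph `P`: a maximal connected collinear set of pixels. -/
def IsFullStrip (P : Set Pixel) (S : Set Pixel) : Prop :=
  ∃ p ∈ P, S = hStrip P p ∨ S = vStrip P p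

/-! A closed walk cannot run straight forever, since its steps sum to zero. So from a turn at
`p` the walk, followed backwards and forwards, leaves `p` along a straight segment inside `P`
and turns again at the end of it; both ends lie in the strips through `p`. A U-turn at `p`
already counts twice, and otherwise the two segments are perpendicular, so their ends are two
further pixels distinct from `p` and from each other. -/

namespace IsUnitStep

variable {d d' : Pixel}

theorem neg (hd : IsUnitStep d) : IsUnitStep (-d) := by
  rcases hd with rfl | rfl | rfl | rfl <;> simp [IsUnitStep]

theorem nsmul_ne_zero (hd : IsUnitStep d) {k : ℕ} (hk : k ≠ 0) : k • d ≠ 0 := by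
  rcases hd with rfl | rfl | rfl | rfl <;> simp [Prod.ext_iff, hk]

theorem eq_neg_of_nsmul_add_nsmul_eq_zero (hd : IsUnitStep d) (hd' : IsUnitStep d') {k m : ℕ}
    (hm : m ≠ 0) (h : k • d + m • d' = 0) : d' = -d := by
  rcases hd with rfl | rfl | rfl | rfl <;> rcases hd' with rfl | rfl | rfl | rfl <;>
    simp [Prod.ext_iff] at h ⊢ <;> omega

theorem turnCost_neg_self (hd : IsUnitStep d) : GridWalk.turnCost d (-d) = 2 := by
  rcases hd with rfl | rfl | rfl | rfl <;> decide

end IsUnitStep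

theorem mem_hStrip_self {P : Set Pixel} {p : Pixel} (hp : p ∈ P) : p ∈ hStrip P p :=
  ⟨rfl, fun x h₁ h₂ => by
    obtain rfl : x = p.1 := le_antisymm (by simpa using h₂) (by simpa using h₁)
    exact hp⟩

theorem nsmul_mem_strips_of_segment {P : Set Pixel} {p d : Pixel} (hd : IsUnitStep d) {m : ℕ}
    (h : ∀ t ≤ m, p + t • d ∈ P) : p + m • d ∈ hStrip P p ∪ vStrip P p := by
  have hcoord : ∀ t : ℕ, p + t • d = (p.1 + t * d.1, p.2 + t * d.2) := fun t => by
    ext <;> simp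
  simp only [hcoord] at h ⊢
  rcases hd with rfl | rfl | rfl | rfl <;> [left; left; right; right] <;>
    refine ⟨by simp, fun x h₁ h₂ => ?_⟩ <;>
    simp only [mul_one, mul_zero, mul_neg, add_zero] at h₁ h₂ h
  · convert h (x - p.1).natAbs (by omega) using 2; omega
  · convert h (x - p.1).natAbs (by omega) using 2; omega
  · convert h (x - p.2).natAbs (by omega) using 2; omega
  · convert h (x - p.2).natAbs (by omega) using 2; omega

namespace GridWalk

variable {n : ℕ}

theorem turnCost_eq_zero_iff {din dout : Pixel} : turnCost din dout = 0 ↔ dout = din := by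
  unfold turnCost
  split_ifs <;> simp_all

theorem turnCost_neg_neg (din dout : Pixel) : turnCost (-dout) (-din) = turnCost din dout := by
  simp only [turnCost, neg_neg, neg_eq_iff_eq_neg, eq_comm]

theorem isUnitStep_dir (w : GridWalk n) (i : ZMod (n + 1)) : IsUnitStep (w.dir i) := w.step i

theorem sum_dir (w : GridWalk n) : ∑ i, w.dir i = 0 := by
  simp only [dir, Finset.sum_sub_distrib, sub_eq_zero]
  exact Fintype.sum_equiv (Equiv.addRight 1) _ _ fun _ => rfl

theorem exists_dir_ne (w : GridWalk n) (d : Pixel) : ∃ i, w.dir i ≠ d := by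
  by_contra! hall
  have hd : IsUnitStep d := hall 0 ▸ w.isUnitStep_dir 0
  have := w.sum_dir
  simp only [hall, Finset.sum_const, Finset.card_univ, ZMod.card] at this
  exact hd.nsmul_ne_zero n.succ_ne_zero this

theorem exists_straight_run_to_turn (w : GridWalk n) (i : ZMod (n + 1)) :
    ∃ m : ℕ, m ≠ 0 ∧ (∀ t ≤ m, w.v (i + t) = w.v i + t • w.dir i) ∧
      w.turnAt (i + m) ≠ 0 := by
  classical
  have hex : ∃ t : ℕ, w.dir (i + t) ≠ w.dir i := by
    obtain ⟨j, hj⟩ := w.exists_dir_ne (w.dir i)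
    exact ⟨(j - i).val, by simpa using hj⟩
  have hstraight : ∀ t < Nat.find hex, w.dir (i + t) = w.dir i :=
    fun t ht => not_not.1 (Nat.find_min hex ht)
  obtain ⟨m, hm⟩ : ∃ m, Nat.find hex = m + 1 :=
    Nat.exists_eq_succ_of_ne_zero fun h0 => by simpa [h0] using Nat.find_spec hex
  refine ⟨Nat.find hex, by omega, fun t ht => ?_, ?_⟩
  · induction t with
    | zero => simp
    | succ t ih =>
      rw [Nat.cast_succ, ← add_assoc, succ_nsmul, ← add_assoc, ← ih (by omega),
        ← hstraight t (by omega), dir, add_sub_cancel]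
  · rw [turnAt, Ne, turnCost_eq_zero_iff, hm, Nat.cast_succ, ← add_assoc, add_sub_cancel_right,
      hstraight m (by omega)]
    simpa [hm, add_assoc] using Nat.find_spec hex

def reverse (w : GridWalk n) : GridWalk n where
  v i := w.v (-i)
  step i := by
    have := (w.step (-i - 1)).neg
    rwa [neg_sub, sub_add_cancel, ← neg_add'] at this

theorem reverse_v (w : GridWalk n) (i : ZMod (n + 1)) : w.reverse.v i = w.v (-i) := rfl

theorem reverse_dir (w : GridWalk n) (i : ZMod (n + 1)) : w.reverse.dir i = -w.dir (-i - 1) := by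
  rw [dir, dir, reverse_v, reverse_v, neg_sub, sub_add_cancel, neg_add']

theorem reverse_turnAt (w : GridWalk n) (i : ZMod (n + 1)) :
    w.reverse.turnAt i = w.turnAt (-i) := by
  rw [turnAt, turnAt, reverse_dir, reverse_dir, turnCost_neg_neg, neg_sub, sub_sub_cancel_left]

theorem exists_turn_ahead_mem_strips {P : Set Pixel} (w : GridWalk n) (hP : ∀ i, w.v i ∈ P)
    (i : ZMod (n + 1)) : ∃ m : ℕ, m ≠ 0 ∧ w.v (i + m) = w.v i + m • w.dir i ∧
      w.v (i + m) ∈ hStrip P (w.v i) ∪ vStrip P (w.v i) ∧ w.turnAt (i + m) ≠ 0 := by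
  obtain ⟨m, hm, hrun, hturn⟩ := w.exists_straight_run_to_turn i
  refine ⟨m, hm, hrun m le_rfl, ?_, hturn⟩
  rw [hrun m le_rfl]
  exact nsmul_mem_strips_of_segment (w.isUnitStep_dir i) fun t ht => hrun t ht ▸ hP _

theorem sum_turnAt_le_turnsIn (w : GridWalk n) {S : Set Pixel} (s : Finset (ZMod (n + 1)))
    (hs : ∀ i ∈ s, w.v i ∈ S) : ∑ i ∈ s, w.turnAt i ≤ w.turnsIn S := by
  calc ∑ i ∈ s, w.turnAt i = ∑ i ∈ s, S.indicator (fun _ => w.turnAt i) (w.v i) :=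
        Finset.sum_congr rfl fun i hi => (Set.indicator_of_mem (hs i hi) fun _ => w.turnAt i).symm
    _ ≤ w.turnsIn S := Finset.sum_le_sum_of_subset (Finset.subset_univ s)

theorem exists_turnAt_ne_zero_of_turnsIn_singleton (w : GridWalk n) {p : Pixel}
    (h : w.turnsIn {p} ≠ 0) : ∃ i, w.v i = p ∧ w.turnAt i ≠ 0 := by
  obtain ⟨i, -, hi⟩ := Finset.exists_ne_zero_of_sum_ne_zero h
  by_cases hp : w.v i = p
  · exact ⟨i, hp, by simpa [hp] using hi⟩
  · simp [hp] at hi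

theorem three_le_turnsIn_strips {P : Set Pixel} (w : GridWalk n)
    (hP : ∀ i, w.v i ∈ P) {i : ZMod (n + 1)} (hi : w.turnAt i ≠ 0) :
    3 ≤ w.turnsIn (hStrip P (w.v i) ∪ vStrip P (w.v i)) := by
  have hpS : w.v i ∈ hStrip P (w.v i) ∪ vStrip P (w.v i) := Or.inl (mem_hStrip_self (hP i))
  obtain ⟨m, hm, hvm, hSm, htm⟩ := w.exists_turn_ahead_mem_strips hP i
  obtain ⟨k, hk, hvk, hSk, htk⟩ :=
    w.reverse.exists_turn_ahead_mem_strips (fun j => hP (-j)) (-i)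
  simp only [reverse_v, reverse_dir, reverse_turnAt, neg_neg] at hvk hSk htk
  set j := -(-i + (k : ZMod (n + 1)))
  have hji : j ≠ i := fun h => (w.isUnitStep_dir _).neg.nsmul_ne_zero hk (by simpa [h] using hvk)
  by_cases hU : w.dir i = -w.dir (i - 1)
  · have hti : w.turnAt i = 2 := by rw [turnAt, hU, (w.isUnitStep_dir _).turnCost_neg_self]
    calc 3 ≤ w.turnAt i + w.turnAt j := by omega
      _ = ∑ l ∈ {i, j}, w.turnAt l := (Finset.sum_pair hji.symm).symm
      _ ≤ _ := w.sum_turnAt_le_turnsIn _ (by simpa using ⟨hpS, hSk⟩)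
  · have hmi : i + m ≠ i := fun h =>
      (w.isUnitStep_dir i).nsmul_ne_zero hm (by simpa [h] using hvm)
    have hjm : j ≠ i + m := fun h => hU <|
      (w.isUnitStep_dir _).eq_neg_of_nsmul_add_nsmul_eq_zero (w.isUnitStep_dir i) hm <| by
        rwa [h, hvm, add_right_inj, smul_neg, eq_neg_iff_add_eq_zero, add_comm] at hvk
    calc 3 ≤ w.turnAt i + w.turnAt j + w.turnAt (i + m) := by omega
      _ = ∑ l ∈ {i, j, i + m}, w.turnAt l := by
        rw [Finset.sum_insert (by simp [hji.symm, hmi.symm]), Finset.sum_pair hjm, add_assoc]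
      _ ≤ _ := w.sum_turnAt_le_turnsIn _ (by simpa using ⟨hpS, hSk, hSm⟩)

end GridWalk

theorem turn_guard_general (P : Set Pixel) (p : Pixel) (C : CycleCover P)
    (h : 0 < C.turnsIn {p}) :
    3 ≤ C.turnsIn (hStrip P p ∪ vStrip P p) := by
  obtain ⟨j, -, hj⟩ := Finset.exists_ne_zero_of_sum_ne_zero h.ne'
  obtain ⟨i, rfl, hi⟩ := (C.walk j).exists_turnAt_ne_zero_of_turnsIn_singleton hj
  calc 3 ≤ (C.walk j).turnsIn _ := (C.walk j).three_le_turnsIn_strips (C.mem j) hi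
    _ ≤ C.turnsIn _ := Finset.single_le_sum (f := fun j => (C.walk j).turnsIn _)
      (fun _ _ => Nat.zero_le _) (Finset.mem_univ j)

/-- if a cycle cover makes a turn at a pixel `p`, then the union of the
horizontal and vertical full strips through `p` contains at least three turns
(with multiplicity, U-turns counting twice). -/
theorem turn_guard (P : Set Pixel) (p : Pixel) (hp : p ∈ P) (C : CycleCover P)
    (h : 0 < C.turnsIn {p}) :
    3 ≤ C.turnsIn (hStrip P p ∪ vStrip P p) :=
  turn_guard_general P p C h
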